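/- Let f be analytic on the unit disk 𝔻 with |f(z)| < 1 for all z ∈ 𝔻, and let a_n denote its Taylor coefficients at 0. Then for every n ≥ 1, |a_n| ≤ 1 - |a_0|². -/

import Mathlib

/-!
Fix `n ≥ 1` and a primitive `n`-th root of unity `ω`. Averaging `f` over the rotations
`z ↦ ωʲ z` kills every coefficient `a m` with `n ∤ m`, so for `w = zⁿ` the series
`H w = ∑ₖ a (n k) wᵏ` equals `n⁻¹ ∑ⱼ f (ωʲ z)`. Hence `H` is a holomorphic self-map of the disk with
`H 0 = a 0` and `H' 0 = a n`, and the claim is the Schwarz–Pick inequality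
`|H' 0| ≤ 1 - |H 0|²`: the Schwarz lemma applied to `H` followed by the disk automorphism
`u ↦ (u - b) / (1 - b̄ u)`, `b = H 0`.
-/

open Metric Set Complex FormalMultilinearSeries
open scoped NNReal ENNReal ComplexConjugate

lemma le_radius_ofScalars_of_hasSum {c : ℕ → ℂ} {g : ℂ → ℂ} {r : ℝ≥0}
    (h : ∀ z ∈ ball (0 : ℂ) r, HasSum (fun k ↦ c k * z ^ k) (g z)) :
    (r : ℝ≥0∞) ≤ (ofScalars ℂ c).radius := by
  refine ENNReal.le_of_forall_nnreal_lt fun s hs ↦ ?_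
  have hs' : (s : ℂ) ∈ ball (0 : ℂ) r := by simpa using hs
  refine (ofScalars ℂ c).le_radius_of_tendsto (l := 0) ?_
  simpa using (h _ hs').summable.tendsto_atTop_zero.norm

lemma hasFPowerSeriesOnBall_ofScalars_of_hasSum {c : ℕ → ℂ} {g : ℂ → ℂ} {r : ℝ≥0} (hr : 0 < r)
    (h : ∀ z ∈ ball (0 : ℂ) r, HasSum (fun k ↦ c k * z ^ k) (g z)) :
    HasFPowerSeriesOnBall g (ofScalars ℂ c) 0 r where
  r_le := le_radius_ofScalars_of_hasSum h
  r_pos := by exact_mod_cast hr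
  hasSum {y} hy := by
    rw [eball_coe] at hy
    simpa [ofScalars_apply_eq, mul_comm] using h y hy

lemma IsPrimitiveRoot.sum_range_pow_pow_eq_ite {R : Type*} [CommRing R] [IsDomain R] {ω : R}
    {n : ℕ} (hω : IsPrimitiveRoot ω n) (m : ℕ) :
    ∑ j ∈ Finset.range n, (ω ^ m) ^ j = if n ∣ m then (n : R) else 0 := by
  split_ifs with hm
  · simp [(hω.pow_eq_one_iff_dvd m).mpr hm]
  · have hne : ω ^ m - 1 ≠ 0 := sub_ne_zero.mpr fun h ↦ hm ((hω.pow_eq_one_iff_dvd m).mp h)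
    have hpow : (ω ^ m) ^ n = 1 := by rw [← pow_mul, mul_comm, pow_mul, hω.pow_eq_one, one_pow]
    refine (mul_eq_zero.mp ?_).resolve_right hne
    rw [geom_sum_mul, hpow, sub_self]

lemma hasSum_comp_mul_of_hasSum_rotations {K : Type*} [Field K] [CharZero K] [TopologicalSpace K]
    [IsTopologicalRing K] {a : ℕ → K} {ω z : K} {n : ℕ} (hn : 0 < n) (hω : IsPrimitiveRoot ω n)
    {s : ℕ → K} (hs : ∀ j, HasSum (fun m ↦ a m * (ω ^ j * z) ^ m) (s j)) :
    HasSum (fun k ↦ a (n * k) * (z ^ n) ^ k) ((n : K)⁻¹ * ∑ j ∈ Finset.range n, s j) := by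
  have hsum : HasSum (fun m ↦ ∑ j ∈ Finset.range n, a m * (ω ^ j * z) ^ m)
      (∑ j ∈ Finset.range n, s j) := hasSum_sum fun j _ ↦ hs j
  have hterm : ∀ m, ∑ j ∈ Finset.range n, a m * (ω ^ j * z) ^ m
      = if n ∣ m then n * (a m * z ^ m) else 0 := fun m ↦ by
    have hfactor : ∑ j ∈ Finset.range n, a m * (ω ^ j * z) ^ m
        = a m * z ^ m * ∑ j ∈ Finset.range n, (ω ^ m) ^ j := by
      rw [Finset.mul_sum]
      exact Finset.sum_congr rfl fun j _ ↦ by ring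
    rw [hfactor, hω.sum_range_pow_pow_eq_ite m]
    split_ifs <;> ring
  simp_rw [hterm] at hsum
  rw [← (mul_right_injective₀ hn.ne').hasSum_iff] at hsum
  · have hn' : (n : K) ≠ 0 := by exact_mod_cast hn.ne'
    simpa [pow_mul, ← mul_assoc, hn'] using hsum.mul_left (n : K)⁻¹
  · intro m hm
    rw [if_neg]
    rintro ⟨k, rfl⟩
    exact hm ⟨k, rfl⟩

noncomputable def diskMobius (b u : ℂ) : ℂ := (u - b) / (1 - conj b * u)

lemma normSq_one_sub_conj_mul (b u : ℂ) :
    normSq (1 - conj b * u) = normSq (u - b) + (1 - normSq b) * (1 - normSq u) := by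
  simp only [normSq_apply, sub_re, sub_im, mul_re, mul_im, one_re, one_im, conj_re, conj_im]
  ring

lemma norm_sub_lt_norm_one_sub_conj_mul {b u : ℂ} (hb : ‖b‖ < 1) (hu : ‖u‖ < 1) :
    ‖u - b‖ < ‖1 - conj b * u‖ := by
  have hb' : normSq b < 1 := by rw [normSq_eq_norm_sq]; nlinarith [norm_nonneg b]
  have hu' : normSq u < 1 := by rw [normSq_eq_norm_sq]; nlinarith [norm_nonneg u]
  rw [← sq_lt_sq₀ (norm_nonneg _) (norm_nonneg _), ← normSq_eq_norm_sq, ← normSq_eq_norm_sq,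
    normSq_one_sub_conj_mul]
  nlinarith

lemma mapsTo_diskMobius {b : ℂ} (hb : ‖b‖ < 1) :
    MapsTo (diskMobius b) (ball 0 1) (ball 0 1) := fun u hu ↦ by
  rw [mem_ball_zero_iff] at hu ⊢
  have hlt := norm_sub_lt_norm_one_sub_conj_mul hb hu
  rw [diskMobius, norm_div, div_lt_one ((norm_nonneg _).trans_lt hlt)]
  exact hlt

lemma one_sub_conj_mul_ne_zero {b u : ℂ} (hb : ‖b‖ < 1) (hu : ‖u‖ < 1) :
    1 - conj b * u ≠ 0 := fun h ↦ by
  have hlt := norm_sub_lt_norm_one_sub_conj_mul hb hu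
  rw [h, norm_zero] at hlt
  exact (norm_nonneg _).not_gt hlt

lemma differentiableOn_diskMobius {b : ℂ} (hb : ‖b‖ < 1) :
    DifferentiableOn ℂ (diskMobius b) (ball 0 1) :=
  (differentiableOn_id.sub_const b).div ((differentiableOn_const 1).sub
    (differentiableOn_id.const_mul _)) fun _ hu ↦
      one_sub_conj_mul_ne_zero hb (mem_ball_zero_iff.mp hu)

lemma diskMobius_self (b : ℂ) : diskMobius b b = 0 := by simp [diskMobius]

lemma hasDerivAt_diskMobius_self {b : ℂ} (hb : ‖b‖ < 1) :
    HasDerivAt (diskMobius b) ((1 - ‖b‖ ^ 2 : ℝ) : ℂ)⁻¹ b := by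
  have hden := one_sub_conj_mul_ne_zero hb hb
  show HasDerivAt (fun u ↦ (u - b) / (1 - conj b * u)) _ b
  refine (((hasDerivAt_id' b).sub_const b).div
    (((hasDerivAt_id' b).const_mul (conj b)).const_sub 1) hden).congr_deriv ?_
  rw [sub_self, zero_mul, sub_zero, one_mul, sq, ← div_div, div_self hden, one_div,
    mul_comm (conj b), mul_conj, normSq_eq_norm_sq]
  push_cast
  rfl

lemma norm_deriv_le_one_sub_sq_norm {H : ℂ → ℂ} (hd : DifferentiableOn ℂ H (ball 0 1))
    (hH : MapsTo H (ball 0 1) (ball 0 1)) :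
    ‖deriv H 0‖ ≤ 1 - ‖H 0‖ ^ 2 := by
  have h0 : (0 : ℂ) ∈ ball (0 : ℂ) 1 := mem_ball_self one_pos
  set b := H 0
  have hb : ‖b‖ < 1 := mem_ball_zero_iff.mp (hH h0)
  have hpos : 0 < 1 - ‖b‖ ^ 2 := by nlinarith [norm_nonneg b]
  have hG : ‖deriv (diskMobius b ∘ H) 0‖ ≤ 1 := by
    refine norm_deriv_le_one_of_mapsTo_ball ((differentiableOn_diskMobius hb).comp hd hH) ?_ one_pos
    rw [Function.comp_apply, diskMobius_self]
    exact ((mapsTo_diskMobius hb).comp hH).mono_right ball_subset_closedBall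
  have hHd : HasDerivAt H (deriv H 0) 0 :=
    (hd.differentiableAt (isOpen_ball.mem_nhds h0)).hasDerivAt
  rw [((hasDerivAt_diskMobius_self hb).comp 0 hHd).deriv, norm_mul, norm_inv, norm_real,
    Real.norm_of_nonneg hpos.le, inv_mul_le_iff₀ hpos, mul_one] at hG
  exact hG

lemma exists_hasSum_comp_mul_norm_lt_one {a : ℕ → ℂ} {f : ℂ → ℂ}
    (hf : ∀ z ∈ ball (0 : ℂ) 1, HasSum (fun m ↦ a m * z ^ m) (f z))
    (hb : ∀ z ∈ ball (0 : ℂ) 1, ‖f z‖ < 1) {n : ℕ} (hn : 0 < n) {w : ℂ}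
    (hw : w ∈ ball (0 : ℂ) 1) :
    ∃ s, HasSum (fun k ↦ a (n * k) * w ^ k) s ∧ ‖s‖ < 1 := by
  obtain ⟨z, rfl⟩ := IsAlgClosed.exists_pow_nat_eq w hn
  have hz : ‖z‖ < 1 := by
    rw [mem_ball_zero_iff, norm_pow] at hw
    exact (pow_lt_one_iff_of_nonneg (norm_nonneg z) hn.ne').mp hw
  obtain ⟨ω, hω⟩ : ∃ ω : ℂ, IsPrimitiveRoot ω n := ⟨_, Complex.isPrimitiveRoot_exp n hn.ne'⟩
  have hrot : ∀ j, ω ^ j * z ∈ ball (0 : ℂ) 1 := fun j ↦ by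
    rwa [mem_ball_zero_iff, norm_mul, norm_pow, hω.norm'_eq_one hn.ne', one_pow, one_mul]
  refine ⟨_, hasSum_comp_mul_of_hasSum_rotations hn hω fun j ↦ hf _ (hrot j), ?_⟩
  have hn' : (0 : ℝ) < n := by exact_mod_cast hn
  calc ‖(n : ℂ)⁻¹ * ∑ j ∈ Finset.range n, f (ω ^ j * z)‖
      ≤ (n : ℝ)⁻¹ * ∑ j ∈ Finset.range n, ‖f (ω ^ j * z)‖ := by
        rw [norm_mul, norm_inv, norm_natCast]
        gcongr
        exact norm_sum_le _ _
    _ < (n : ℝ)⁻¹ * ∑ _j ∈ Finset.range n, 1 := by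
        gcongr
        · exact Finset.nonempty_range_iff.mpr hn.ne'
        · exact hb _ (hrot _)
    _ = 1 := by simp [hn'.ne']

/-- If `f(z) = Σ aₙ zⁿ` is analytic on the unit disk with `|f| < 1`,
then `|aₙ| ≤ 1 - |a₀|²` for every `n ≥ 1`. -/
theorem coeff_bound (a : ℕ → ℂ) (f : ℂ → ℂ)
    (hf : ∀ z ∈ Metric.ball (0 : ℂ) 1, HasSum (fun n => a n * z ^ n) (f z))
    (hb : ∀ z ∈ Metric.ball (0 : ℂ) 1, ‖f z‖ < 1)
    (n : ℕ) (hn : 1 ≤ n) :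
    ‖a n‖ ≤ 1 - ‖a 0‖ ^ 2 := by
  choose! H hH hHb using fun w (hw : w ∈ ball (0 : ℂ) 1) ↦
    exists_hasSum_comp_mul_norm_lt_one hf hb hn hw
  have hps : HasFPowerSeriesOnBall H (ofScalars ℂ fun k ↦ a (n * k)) 0 1 :=
    hasFPowerSeriesOnBall_ofScalars_of_hasSum one_pos (by simpa using hH)
  have hdiff : DifferentiableOn ℂ H (ball 0 1) := by
    simpa [← ENNReal.coe_one, eball_coe] using hps.differentiableOn
  have h0 : H 0 = a 0 := by simpa using (hps.hasFPowerSeriesAt.coeff_zero fun _ ↦ 0).symm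
  have h1 : deriv H 0 = a n := by simpa using hps.hasFPowerSeriesAt.deriv
  simpa [h0, h1] using
    norm_deriv_le_one_sub_sq_norm hdiff fun w hw ↦ mem_ball_zero_iff.mpr (hHb w hw)
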